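/- Suppose m' ≤ ⌊n/m⌋ - 1. For every choice of transition probabilities p_0, …, p_{m'} ∈ [0,1] such that the first return time X to state 0 of the age Markov chain started at 0 is almost surely finite and satisfies E[X] = n/m, one has Var[X] ≥ (n/m - m')·(n/m - (m'+1)). Consequently the minimum variance of X subject to E[X] = n/m equals (n/m - m')·(n/m - (m'+1)), attained at p_0 = ⋯ = p_{m'-1} = 0 and p_{m'} = 1/(n/m - m'). -/

import Mathlib

open MeasureTheory ProbabilityTheory Finset
open scoped ProbabilityTheory ENNReal

noncomputable section

/-- The age Markov chain on `{0, 1, …, m'}` started at state `0`, driven by a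
sequence `U` of random numbers: at time `t`, if the chain is in state `j`, it
moves to `0` when `U t < p j` and otherwise moves to `min (j+1) m'`. -/
def ageChain {Ω : Type*} (m' : ℕ) (p : ℕ → ℝ) (U : ℕ → Ω → ℝ) : ℕ → Ω → ℕ
  | 0, _ => 0
  | t + 1, ω =>
      if U t ω < p (ageChain m' p U t ω) then 0
      else min (ageChain m' p U t ω + 1) m'

/-- The first return time to state `0` of the age chain started at `0`. -/
def firstReturn {Ω : Type*} (m' : ℕ) (p : ℕ → ℝ) (U : ℕ → Ω → ℝ) (ω : Ω) : ℕ :=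
  sInf {t | 1 ≤ t ∧ ageChain m' p U t ω = 0}

/-- The policy `p_0 = ⋯ = p_{m'-1} = 0`, `p_{m'} = 1/(n/m - m')`. -/
def optPolicyA (n m m' : ℕ) : ℕ → ℝ :=
  fun j => if j < m' then 0 else ((n : ℝ) / m - m')⁻¹

set_option linter.unusedSectionVars false

section ChainAux

variable {Ω : Type*} (m' : ℕ) (p : ℕ → ℝ) (U : ℕ → Ω → ℝ)

lemma ageChain_eq_min {ω : Ω} {t : ℕ} (h : ∀ s < t, p (min s m') ≤ U s ω) :
    ageChain m' p U t ω = min t m' := by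
  induction t with
  | zero => simp [ageChain]
  | succ t ih =>
    have h1 := ih fun s hs => h s (hs.trans (Nat.lt_succ_self t))
    simp only [ageChain, h1, if_neg (not_lt.2 (h t (Nat.lt_succ_self t)))]
    omega

lemma survive_iff (hm' : 1 ≤ m') {ω : Ω} (t : ℕ) :
    (∀ s, 1 ≤ s → s ≤ t → ageChain m' p U s ω ≠ 0) ↔ (∀ s < t, p (min s m') ≤ U s ω) := by
  induction t with
  | zero =>
    constructor
    · intro _ s h1; omega
    · intro _ s h1 h2 h3; omega
  | succ t ih =>
    constructor
    · intro h s hs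
      rcases Nat.lt_succ_iff_lt_or_eq.1 hs with hs | rfl
      · exact (ih.1 fun u h1 h2 => h u h1 (h2.trans t.le_succ)) s hs
      · have hcond : ∀ u < s, p (min u m') ≤ U u ω :=
          ih.1 fun u h1 h2 => h u h1 (h2.trans s.le_succ)
        have hage := ageChain_eq_min m' p U hcond
        have h2 := h (s + 1) (Nat.le_add_left 1 s) le_rfl
        by_contra hlt
        push_neg at hlt
        exact h2 (by simp only [ageChain, hage, if_pos hlt])
    · intro h s h1 h2
      have := ageChain_eq_min m' p U (fun u hu => h u (lt_of_lt_of_le hu h2))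
      omega

lemma b_tail (u : ℕ) :
    (∏ s ∈ Finset.range (u + m'), (1 - p (min s m')))
      = (∏ s ∈ Finset.range m', (1 - p (min s m'))) * (1 - p m') ^ u := by
  induction u with
  | zero => simp
  | succ u ih =>
    have : u + 1 + m' = (u + m') + 1 := by omega
    rw [this, Finset.prod_range_succ, ih, min_eq_right (Nat.le_add_left m' u), pow_succ]
    ring

variable [MeasurableSpace Ω]

lemma measurable_ageChain (hU : ∀ t, Measurable (U t)) (t : ℕ) :
    Measurable (fun ω => ageChain m' p U t ω) := by
  induction t with
  | zero =>
    have : (fun ω : Ω => ageChain m' p U 0 ω) = fun _ => 0 := rfl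
    rw [this]; exact measurable_const
  | succ t ih =>
    have hset : MeasurableSet {ω | U t ω < p (ageChain m' p U t ω)} :=
      measurableSet_lt (hU t) (measurable_from_top.comp ih)
    have : (fun ω => ageChain m' p U (t + 1) ω) = fun ω =>
        if U t ω < p (ageChain m' p U t ω) then 0 else min (ageChain m' p U t ω + 1) m' := rfl
    rw [this]
    exact Measurable.ite hset measurable_const
      ((measurable_from_top (f := fun j : ℕ => min (j + 1) m')).comp ih)

lemma measurable_firstReturn (hU : ∀ t, Measurable (U t)) :
    Measurable (firstReturn m' p U) := by
  have hB : ∀ t : ℕ, MeasurableSet {ω | ¬(1 ≤ t ∧ ageChain m' p U t ω = 0)} := by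
    intro t
    by_cases ht : 1 ≤ t
    · simp only [ht, true_and]
      exact (measurable_ageChain m' p U hU t (measurableSet_singleton 0)).compl
    · simp only [ht, false_and, not_false_eq_true, Set.setOf_true]
      exact MeasurableSet.univ
  apply measurable_to_countable'
  intro k
  rcases Nat.eq_zero_or_pos k with rfl | hk
  · have : firstReturn m' p U ⁻¹' {0} =
        ⋂ t : ℕ, {ω | ¬(1 ≤ t ∧ ageChain m' p U t ω = 0)} := by
      ext ω
      simp only [Set.mem_preimage, Set.mem_singleton_iff, Set.mem_iInter, firstReturn,
        Set.mem_setOf_eq]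
      rw [Nat.sInf_eq_zero]
      constructor
      · rintro (⟨h0, _⟩ | hS) t ht
        · omega
        · exact (Set.eq_empty_iff_forall_notMem.1 hS t) ht
      · intro h; right; ext t; simp only [Set.mem_setOf_eq, Set.mem_empty_iff_false, iff_false]
        exact h t
    rw [this]
    exact MeasurableSet.iInter fun t => hB t
  · have : firstReturn m' p U ⁻¹' {k} =
        ({ω | ageChain m' p U k ω = 0} ∩
          ⋂ j ∈ Finset.range k, {ω | ¬(1 ≤ j ∧ ageChain m' p U j ω = 0)}) := by
      ext ω
      simp only [Set.mem_preimage, Set.mem_singleton_iff, Set.mem_inter_iff, Set.mem_iInter,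
        Set.mem_setOf_eq, Finset.mem_range, firstReturn]
      constructor
      · intro h
        have hne : {t | 1 ≤ t ∧ ageChain m' p U t ω = 0}.Nonempty := by
          by_contra hemp
          rw [Set.not_nonempty_iff_eq_empty] at hemp
          rw [hemp] at h
          simp [Nat.sInf_empty] at h
          omega
        have hmem := Nat.sInf_mem hne
        rw [h] at hmem
        refine ⟨hmem.2, fun j hj => ?_⟩
        exact Nat.notMem_of_lt_sInf (s := {t | 1 ≤ t ∧ ageChain m' p U t ω = 0})
          (by omega : j < sInf {t | 1 ≤ t ∧ ageChain m' p U t ω = 0})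
      · rintro ⟨hk0, hj⟩
        have hkmem : k ∈ {t | 1 ≤ t ∧ ageChain m' p U t ω = 0} := ⟨hk, hk0⟩
        refine le_antisymm (Nat.sInf_le hkmem) ?_
        by_contra hlt
        push_neg at hlt
        have := Nat.sInf_mem ⟨k, hkmem⟩
        exact hj _ hlt this
    rw [this]
    refine MeasurableSet.inter (measurable_ageChain m' p U hU k (measurableSet_singleton 0)) ?_
    exact MeasurableSet.biInter (Set.to_countable _) fun j _ => hB j

lemma measurableSet_G (hU : ∀ t, Measurable (U t)) :
    MeasurableSet {ω | ∃ t, 1 ≤ t ∧ ageChain m' p U t ω = 0} := by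
  have : {ω | ∃ t, 1 ≤ t ∧ ageChain m' p U t ω = 0}
      = ⋃ k : ℕ, {ω | 1 ≤ k ∧ ageChain m' p U k ω = 0} := by
    ext ω; simp
  rw [this]
  refine MeasurableSet.iUnion fun k => ?_
  by_cases hk : 1 ≤ k
  · simp only [hk, true_and]
    exact measurable_ageChain m' p U hU k (measurableSet_singleton 0)
  · simp only [hk, false_and, Set.setOf_false]
    exact MeasurableSet.empty

end ChainAux

section PureAnalysis

lemma sum_odd_sq (N : ℕ) : ∑ t ∈ Finset.range N, (2 * t + 1) = N ^ 2 := by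
  induction N with
  | zero => simp
  | succ N ih => rw [Finset.sum_range_succ, ih]; ring

lemma front_sq (a : ℕ → ℝ) (h0 : ∀ t, 0 ≤ a t) (h1 : ∀ t, a t ≤ 1) (N : ℕ) :
    (∑ t ∈ Finset.range N, a t) ^ 2 ≤ ∑ t ∈ Finset.range N, (2 * t + 1 : ℝ) * a t := by
  induction N with
  | zero => simp
  | succ N ih =>
    rw [Finset.sum_range_succ, Finset.sum_range_succ]
    have hle : ∑ t ∈ Finset.range N, a t ≤ N := by
      calc ∑ t ∈ Finset.range N, a t ≤ ∑ t ∈ Finset.range N, 1 :=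
            Finset.sum_le_sum fun t _ => h1 t
        _ = N := by simp
    have hnn : 0 ≤ ∑ t ∈ Finset.range N, a t := Finset.sum_nonneg fun t _ => h0 t
    nlinarith [h0 N, h1 N, mul_le_mul_of_nonneg_right hle (h0 N),
      mul_le_mul_of_nonneg_left (h1 N) (h0 N)]

lemma arith_core (m' q A T s γ β F G C : ℝ) (hm'1 : 1 ≤ m')
    (hβγ : β * γ = γ - 1) (hγpos : 0 < γ) (hs0 : 0 ≤ s) (hs1 : s ≤ 1) (hβ0 : 0 ≤ β)
    (hT : T = s * γ) (hq_eq : A + T = q) (hA_le : A ≤ m') (hF : A ^ 2 ≤ F)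
    (hG : G = (2 * m' + 1) * s * γ + 2 * s * (β * γ ^ 2)) (hC : F + G = C)
    (hq : m' + 1 ≤ q) :
    q ^ 2 + (q - m') * (q - (m' + 1)) ≤ C := by
  have hTge : q - m' ≤ T := by linarith
  have hsβγ : s * (β * γ ^ 2) = T * (γ - 1) := by
    rw [hT]; linear_combination (s * γ) * hβγ
  have hT0 : 0 ≤ T := by rw [hT]; positivity
  have hTle : T ≤ γ := by rw [hT]; nlinarith
  have hTT : T * T ≤ T * γ := by nlinarith
  have hG' : (2 * m' - 1) * T + 2 * (T * T) ≤ G := by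
    rw [hG, hT]
    nlinarith [hsβγ, hTT, hT]
  have hd1 : (1 : ℝ) ≤ q - m' := by linarith
  nlinarith [mul_nonneg (sub_nonneg.2 hTge) (by nlinarith : (0:ℝ) ≤ 3 * T + (q - m') - 1)]

lemma variance_core (m' : ℕ) (hm' : 1 ≤ m') (q : ℝ) (hq : (m' : ℝ) + 1 ≤ q)
    (b : ℕ → ℝ) (hb0 : ∀ t, 0 ≤ b t) (hb1 : ∀ t, b t ≤ 1)
    (β : ℝ) (hβ0 : 0 ≤ β) (hβlt : β < 1)
    (htail : ∀ u : ℕ, b (u + m') = b m' * β ^ u)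
    (hsum : Summable b) (hmean : ∑' t, b t = q) :
    Summable (fun t : ℕ => (2 * t + 1 : ℝ) * b t) ∧
      q ^ 2 + (q - m') * (q - (m' + 1)) ≤ ∑' t : ℕ, (2 * t + 1 : ℝ) * b t := by
  set s := b m' with hs
  have hs0 : 0 ≤ s := hb0 m'
  have hs1 : s ≤ 1 := hb1 m'
  set γ := (1 - β)⁻¹ with hγ
  have h1β : 0 < 1 - β := by linarith
  have hγpos : 0 < γ := inv_pos.2 h1β
  have hβγ : β * γ = γ - 1 := by
    rw [hγ]; linear_combination (-1:ℝ) * inv_mul_cancel₀ h1β.ne'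
  have hnorm : ‖β‖ < 1 := by rwa [Real.norm_eq_abs, abs_of_nonneg hβ0]
  have hg1 : Summable (fun u : ℕ => β ^ u) := summable_geometric_of_lt_one hβ0 hβlt
  have hg1v : ∑' u : ℕ, β ^ u = γ := tsum_geometric_of_lt_one hβ0 hβlt
  have hg2 : Summable (fun u : ℕ => (u : ℝ) * β ^ u) := by
    simpa [pow_one] using summable_pow_mul_geometric_of_norm_lt_one 1 hnorm
  have hg2v : ∑' u : ℕ, (u : ℝ) * β ^ u = β * γ ^ 2 := by
    rw [tsum_coe_mul_geometric_of_norm_lt_one hnorm]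
    rw [hγ, div_eq_mul_inv, ← inv_pow]
  set c := fun t : ℕ => (2 * t + 1 : ℝ) * b t with hc
  have hc_tail : ∀ u : ℕ, c (u + m')
      = (2 * m' + 1) * s * β ^ u + 2 * s * ((u : ℝ) * β ^ u) := by
    intro u
    simp only [hc, htail u]
    push_cast
    ring
  have hcsum_tail : Summable (fun u : ℕ => c (u + m')) := by
    rw [funext hc_tail]
    exact (hg1.mul_left _).add (hg2.mul_left _)
  have hcsum : Summable c := (summable_nat_add_iff m').1 hcsum_tail
  set T := s * γ with hT
  have hbtail_sum : ∑' u : ℕ, b (u + m') = T := by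
    have : (fun u : ℕ => b (u + m')) = fun u : ℕ => s * β ^ u := funext htail
    rw [this, tsum_mul_left, hg1v]
  set A := ∑ t ∈ Finset.range m', b t with hA
  have hq_eq : A + T = q := by
    rw [← hbtail_sum, hA, hsum.sum_add_tsum_nat_add m', hmean]
  have hA_le : A ≤ m' := by
    calc A ≤ ∑ t ∈ Finset.range m', 1 := Finset.sum_le_sum fun t _ => hb1 t
      _ = m' := by simp
  have hF : A ^ 2 ≤ ∑ t ∈ Finset.range m', c t := front_sq b hb0 hb1 m'
  have hG : ∑' u : ℕ, c (u + m') = (2 * m' + 1) * s * γ + 2 * s * (β * γ ^ 2) := by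
    rw [funext hc_tail, Summable.tsum_add (hg1.mul_left _) (hg2.mul_left _), tsum_mul_left, tsum_mul_left,
      hg1v, hg2v]
  have hsplit : (∑ t ∈ Finset.range m', c t) + ∑' u : ℕ, c (u + m') = ∑' t, c t :=
    hcsum.sum_add_tsum_nat_add m'
  refine ⟨hcsum, ?_⟩
  exact arith_core m' q A T s γ β (∑ t ∈ Finset.range m', c t) (∑' u : ℕ, c (u + m'))
    (∑' t, c t) (by exact_mod_cast hm') hβγ hγpos hs0 hs1 hβ0 hT hq_eq hA_le hF hG hsplit hq

lemma beta_lt_one (m' : ℕ) (q : ℝ) (hq : (m' : ℝ) + 1 ≤ q)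
    (b : ℕ → ℝ) (hb1 : ∀ t, b t ≤ 1) (β : ℝ) (hβ1 : β ≤ 1)
    (htail : ∀ u : ℕ, b (u + m') = b m' * β ^ u)
    (hsum : Summable b) (hmean : ∑' t, b t = q) : β < 1 := by
  by_contra h
  have hβeq : β = 1 := le_antisymm hβ1 (not_lt.1 h)
  have hconst : ∀ u : ℕ, b (u + m') = b m' := by
    intro u; rw [htail, hβeq, one_pow, mul_one]
  have h0 : Filter.Tendsto (fun u : ℕ => b (u + m')) Filter.atTop (nhds 0) :=
    hsum.tendsto_atTop_zero.comp (Filter.tendsto_add_atTop_nat m')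
  have h0' : Filter.Tendsto (fun _ : ℕ => b m') Filter.atTop (nhds 0) := by
    simpa only [hconst] using h0
  have hbm : b m' = 0 := tendsto_nhds_unique tendsto_const_nhds h0'
  have hzero : ∀ t ∉ Finset.range m', b t = 0 := by
    intro t ht
    simp only [Finset.mem_range, not_lt] at ht
    have h1 : b ((t - m') + m') = b m' * β ^ (t - m') := htail _
    rw [Nat.sub_add_cancel ht] at h1
    rw [h1, hbm, zero_mul]
  have heq : ∑' t, b t = ∑ t ∈ Finset.range m', b t := tsum_eq_sum hzero
  have hle : ∑ t ∈ Finset.range m', b t ≤ m' := by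
    calc ∑ t ∈ Finset.range m', b t ≤ ∑ _t ∈ Finset.range m', (1:ℝ) :=
          Finset.sum_le_sum fun t _ => hb1 t
      _ = m' := by simp
  rw [hmean] at heq
  linarith

lemma tail_sum_eq (m' : ℕ) (s β : ℝ) (hβ0 : 0 ≤ β) (hβlt : β < 1) :
    Summable (fun u : ℕ => (2 * (u : ℝ) + 2 * m' + 1) * (s * β ^ u)) ∧
    ∑' u : ℕ, (2 * (u : ℝ) + 2 * m' + 1) * (s * β ^ u)
      = (2 * m' + 1) * s * (1 - β)⁻¹ + 2 * s * (β * ((1 - β)⁻¹) ^ 2) := by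
  have hnorm : ‖β‖ < 1 := by rwa [Real.norm_eq_abs, abs_of_nonneg hβ0]
  have hg1 : Summable (fun u : ℕ => β ^ u) := summable_geometric_of_lt_one hβ0 hβlt
  have hg1v : ∑' u : ℕ, β ^ u = (1 - β)⁻¹ := tsum_geometric_of_lt_one hβ0 hβlt
  have hg2 : Summable (fun u : ℕ => (u : ℝ) * β ^ u) := by
    simpa [pow_one] using summable_pow_mul_geometric_of_norm_lt_one 1 hnorm
  have hg2v : ∑' u : ℕ, (u : ℝ) * β ^ u = β * ((1 - β)⁻¹) ^ 2 := by
    rw [tsum_coe_mul_geometric_of_norm_lt_one hnorm, div_eq_mul_inv, ← inv_pow]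
  have hfe : (fun u : ℕ => (2 * (u : ℝ) + 2 * m' + 1) * (s * β ^ u))
      = fun u : ℕ => (2 * m' + 1) * s * β ^ u + 2 * s * ((u : ℝ) * β ^ u) := by
    funext u; ring
  constructor
  · rw [hfe]; exact (hg1.mul_left _).add (hg2.mul_left _)
  · rw [hfe, Summable.tsum_add (hg1.mul_left _) (hg2.mul_left _), tsum_mul_left, tsum_mul_left,
      hg1v, hg2v]

end PureAnalysis

section ProbAux

variable {Ω : Type*} [MeasureSpace Ω] [IsProbabilityMeasure (ℙ : Measure Ω)]

lemma lintegral_nat {g : Ω → ℕ} (hg : Measurable g) :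
    ∫⁻ ω, (g ω : ℝ≥0∞) ∂ℙ = ∑' t : ℕ, ℙ {ω | t < g ω} := by
  have hmeas : ∀ t : ℕ, MeasurableSet {ω | t < g ω} := fun t => hg measurableSet_Ioi
  have hpt : ∀ ω, (g ω : ℝ≥0∞) = ∑' t : ℕ, Set.indicator {ω | t < g ω} (fun _ => 1) ω := by
    intro ω
    rw [tsum_eq_sum (s := Finset.range (g ω)) (fun t ht => by
      simp only [Finset.mem_range, not_lt] at ht
      simp [Set.indicator_apply, Set.mem_setOf_eq, not_lt.2 ht])]
    have : ∀ t ∈ Finset.range (g ω), Set.indicator {ω | t < g ω} (fun _ => (1:ℝ≥0∞)) ω = 1 := by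
      intro t ht
      simp only [Finset.mem_range] at ht
      simp [Set.indicator_apply, ht]
    rw [Finset.sum_congr rfl this]
    simp
  calc ∫⁻ ω, (g ω : ℝ≥0∞) ∂ℙ
      = ∫⁻ ω, ∑' t : ℕ, Set.indicator {ω | t < g ω} (fun _ => 1) ω ∂ℙ := by
        congr 1; ext ω; exact hpt ω
    _ = ∑' t : ℕ, ∫⁻ ω, Set.indicator {ω | t < g ω} (fun _ => 1) ω ∂ℙ :=
        lintegral_tsum fun t => (measurable_const.indicator (hmeas t)).aemeasurable
    _ = ∑' t : ℕ, ℙ {ω | t < g ω} := by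
        congr 1; ext t
        exact lintegral_indicator_one (hmeas t)

lemma lintegral_nat_sq {g : Ω → ℕ} (hg : Measurable g) :
    ∫⁻ ω, (g ω : ℝ≥0∞) ^ 2 ∂ℙ = ∑' t : ℕ, (2 * t + 1 : ℝ≥0∞) * ℙ {ω | t < g ω} := by
  have hmeas : ∀ t : ℕ, MeasurableSet {ω | t < g ω} := fun t => hg measurableSet_Ioi
  have hpt : ∀ ω, (g ω : ℝ≥0∞) ^ 2
      = ∑' t : ℕ, (2 * t + 1 : ℝ≥0∞) * Set.indicator {ω | t < g ω} (fun _ => 1) ω := by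
    intro ω
    rw [tsum_eq_sum (s := Finset.range (g ω)) (fun t ht => by
      simp only [Finset.mem_range, not_lt] at ht
      simp [Set.indicator_apply, Set.mem_setOf_eq, not_lt.2 ht])]
    have h1 : ∀ t ∈ Finset.range (g ω), (2 * t + 1 : ℝ≥0∞) *
        Set.indicator {ω | t < g ω} (fun _ => (1:ℝ≥0∞)) ω = ((2 * t + 1 : ℕ) : ℝ≥0∞) := by
      intro t ht
      simp only [Finset.mem_range] at ht
      simp only [Set.indicator_apply, Set.mem_setOf_eq, ht, if_true, mul_one]
      push_cast
      ring
    rw [Finset.sum_congr rfl h1, ← Nat.cast_sum, sum_odd_sq]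
    push_cast
    ring
  calc ∫⁻ ω, (g ω : ℝ≥0∞) ^ 2 ∂ℙ
      = ∫⁻ ω, ∑' t : ℕ, (2 * t + 1 : ℝ≥0∞) * Set.indicator {ω | t < g ω} (fun _ => 1) ω ∂ℙ := by
        congr 1; ext ω; exact hpt ω
    _ = ∑' t : ℕ, ∫⁻ ω, (2 * t + 1 : ℝ≥0∞) * Set.indicator {ω | t < g ω} (fun _ => 1) ω ∂ℙ :=
        lintegral_tsum fun t =>
          ((measurable_const.indicator (hmeas t)).const_mul _).aemeasurable
    _ = ∑' t : ℕ, (2 * t + 1 : ℝ≥0∞) * ℙ {ω | t < g ω} := by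
        congr 1; ext t
        rw [lintegral_const_mul _ (measurable_const.indicator (hmeas t))]
        congr 1
        exact lintegral_indicator_one (hmeas t)

lemma integral_of_lintegral_nat {g : Ω → ℕ} (hg : Measurable g)
    (h : ∫⁻ ω, (g ω : ℝ≥0∞) ∂ℙ ≠ ∞) :
    Integrable (fun ω => (g ω : ℝ)) ℙ ∧
      ∫ ω, (g ω : ℝ) ∂ℙ = (∫⁻ ω, (g ω : ℝ≥0∞) ∂ℙ).toReal := by
  have hsm : AEStronglyMeasurable (fun ω => (g ω : ℝ)) ℙ :=
    (measurable_from_top.comp hg).aestronglyMeasurable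
  have hnorm : ∀ ω, ‖(g ω : ℝ)‖ₑ = (g ω : ℝ≥0∞) := by
    intro ω
    rw [Real.enorm_eq_ofReal (by positivity), ENNReal.ofReal_natCast]
  constructor
  · refine ⟨hsm, ?_⟩
    rw [HasFiniteIntegral]
    simpa only [hnorm] using h.lt_top
  · rw [integral_eq_lintegral_of_nonneg_ae
      (Filter.Eventually.of_forall fun ω => by positivity) hsm]
    congr 1
    congr 1
    ext ω
    rw [ENNReal.ofReal_natCast]

lemma integral_of_lintegral_nat_sq {g : Ω → ℕ} (hg : Measurable g)
    (h : ∫⁻ ω, (g ω : ℝ≥0∞) ^ 2 ∂ℙ ≠ ∞) :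
    Integrable (fun ω => (g ω : ℝ) ^ 2) ℙ ∧
      ∫ ω, (g ω : ℝ) ^ 2 ∂ℙ = (∫⁻ ω, (g ω : ℝ≥0∞) ^ 2 ∂ℙ).toReal := by
  have hsm : AEStronglyMeasurable (fun ω => (g ω : ℝ) ^ 2) ℙ :=
    ((measurable_from_top (f := fun k : ℕ => ((k : ℝ) ^ 2))).comp hg).aestronglyMeasurable
  have hnorm : ∀ ω, ‖(g ω : ℝ) ^ 2‖ₑ = (g ω : ℝ≥0∞) ^ 2 := by
    intro ω
    rw [Real.enorm_eq_ofReal (by positivity), ENNReal.ofReal_pow (by positivity),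
      ENNReal.ofReal_natCast]
  constructor
  · refine ⟨hsm, ?_⟩
    rw [HasFiniteIntegral]
    simpa only [hnorm] using h.lt_top
  · rw [integral_eq_lintegral_of_nonneg_ae
      (Filter.Eventually.of_forall fun ω => by positivity) hsm]
    congr 1
    congr 1
    ext ω
    rw [ENNReal.ofReal_pow (by positivity), ENNReal.ofReal_natCast]

variable (m' : ℕ) (p : ℕ → ℝ) (U : ℕ → Ω → ℝ)

lemma measure_E (hU : ∀ t, Measurable (U t))
    (hUindep : iIndepFun U ℙ)
    (hUunif : ∀ t, Measure.map (U t) ℙ = volume.restrict (Set.Icc (0 : ℝ) 1))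
    (hp : ∀ j ≤ m', p j ∈ Set.Icc (0 : ℝ) 1) (t : ℕ) :
    ℙ {ω | ∀ s < t, p (min s m') ≤ U s ω}
      = ENNReal.ofReal (∏ s ∈ Finset.range t, (1 - p (min s m'))) := by
  have hpmem : ∀ s : ℕ, p (min s m') ∈ Set.Icc (0:ℝ) 1 := fun s =>
    hp _ (min_le_right s m')
  have hset : {ω | ∀ s < t, p (min s m') ≤ U s ω}
      = ⋂ s ∈ Finset.range t, U s ⁻¹' Set.Ici (p (min s m')) := by
    ext ω
    simp [Set.mem_iInter, Set.mem_preimage, Set.mem_Ici]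
  rw [hset, hUindep.measure_inter_preimage_eq_mul (Finset.range t)
    (sets := fun s => Set.Ici (p (min s m'))) (fun i _ => measurableSet_Ici),
    ENNReal.ofReal_prod_of_nonneg (fun s _ => by linarith [(hpmem s).2])]
  refine Finset.prod_congr rfl fun s _ => ?_
  rw [← Measure.map_apply (hU s) measurableSet_Ici, hUunif s,
    Measure.restrict_apply measurableSet_Ici]
  have : Set.Ici (p (min s m')) ∩ Set.Icc (0:ℝ) 1 = Set.Icc (p (min s m')) 1 := by
    ext x
    simp only [Set.mem_inter_iff, Set.mem_Ici, Set.mem_Icc]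
    constructor
    · rintro ⟨h1, _, h3⟩; exact ⟨h1, h3⟩
    · rintro ⟨h1, h2⟩; exact ⟨h1, le_trans (hpmem s).1 h1, h2⟩
  rw [this, Real.volume_Icc]

lemma measure_gt_firstReturn (hU : ∀ t, Measurable (U t))
    (hUindep : iIndepFun U ℙ)
    (hUunif : ∀ t, Measure.map (U t) ℙ = volume.restrict (Set.Icc (0 : ℝ) 1))
    (hm' : 1 ≤ m') (hp : ∀ j ≤ m', p j ∈ Set.Icc (0 : ℝ) 1)
    (hfin : ℙ {ω | ∃ t, 1 ≤ t ∧ ageChain m' p U t ω = 0} = 1) (t : ℕ) :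
    ℙ {ω | t < firstReturn m' p U ω}
      = ENNReal.ofReal (∏ s ∈ Finset.range t, (1 - p (min s m'))) := by
  set G := {ω | ∃ t, 1 ≤ t ∧ ageChain m' p U t ω = 0} with hG
  set E := {ω | ∀ s < t, p (min s m') ≤ U s ω} with hE
  have hsub1 : {ω | t < firstReturn m' p U ω} ⊆ E := by
    intro ω hω
    have hω' : t < firstReturn m' p U ω := hω
    simp only [Set.mem_setOf_eq, hE]
    rw [← survive_iff m' p U hm']
    intro s h1 h2 hzero
    have hmem : s ∈ {u | 1 ≤ u ∧ ageChain m' p U u ω = 0} := ⟨h1, hzero⟩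
    have hle : firstReturn m' p U ω ≤ s := Nat.sInf_le hmem
    omega
  have hsub2 : E ∩ G ⊆ {ω | t < firstReturn m' p U ω} := by
    rintro ω ⟨hωE, r, hr⟩
    simp only [Set.mem_setOf_eq]
    have hsurv := (survive_iff m' p U hm' (ω := ω) t).2 hωE
    have hne : {u | 1 ≤ u ∧ ageChain m' p U u ω = 0}.Nonempty := ⟨r, hr⟩
    have hmem := Nat.sInf_mem hne
    by_contra hle
    push_neg at hle
    exact hsurv _ hmem.1 (le_trans (by exact hle) le_rfl) hmem.2
  have hGc : ℙ Gᶜ = 0 := by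
    rw [prob_compl_eq_one_sub (measurableSet_G m' p U hU), hfin]; simp
  have h1 : ℙ {ω | t < firstReturn m' p U ω} ≤ ℙ E := measure_mono hsub1
  have h2 : ℙ E ≤ ℙ {ω | t < firstReturn m' p U ω} := by
    calc ℙ E ≤ ℙ ((E ∩ G) ∪ Gᶜ) := measure_mono (fun ω hω => by
          by_cases hg : ω ∈ G
          · exact Or.inl ⟨hω, hg⟩
          · exact Or.inr hg)
      _ ≤ ℙ (E ∩ G) + ℙ Gᶜ := measure_union_le _ _
      _ = ℙ (E ∩ G) := by rw [hGc, add_zero]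
      _ ≤ _ := measure_mono hsub2
  rw [le_antisymm h1 h2]
  exact measure_E m' p U hU hUindep hUunif hp t

/-- Almost sure return when the hazard at the top state is positive. -/
lemma fin_of_beta_lt_one (hU : ∀ t, Measurable (U t))
    (hUindep : iIndepFun U ℙ)
    (hUunif : ∀ t, Measure.map (U t) ℙ = volume.restrict (Set.Icc (0 : ℝ) 1))
    (hm' : 1 ≤ m') (hp : ∀ j ≤ m', p j ∈ Set.Icc (0 : ℝ) 1)
    (hβ0 : 0 ≤ 1 - p m') (hβlt : 1 - p m' < 1) :
    ℙ {ω | ∃ t, 1 ≤ t ∧ ageChain m' p U t ω = 0} = 1 := by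
  set β := 1 - p m' with hβ
  set G := {ω | ∃ t, 1 ≤ t ∧ ageChain m' p U t ω = 0} with hG
  rw [← prob_compl_eq_zero_iff (measurableSet_G m' p U hU)]
  have hsub : ∀ u : ℕ, Gᶜ ⊆ {ω | ∀ s < u + m', p (min s m') ≤ U s ω} := by
    intro u ω hω
    simp only [hG, Set.mem_compl_iff, Set.mem_setOf_eq, not_exists, not_and] at hω
    exact (survive_iff m' p U hm' (u + m')).1 (fun s h1 _ => hω s h1)
  have hb1 : (∏ s ∈ Finset.range m', (1 - p (min s m'))) ≤ 1 := by
    refine Finset.prod_le_one (fun s _ => ?_) (fun s _ => ?_)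
    · have := hp (min s m') (min_le_right s m'); linarith [this.2]
    · have := hp (min s m') (min_le_right s m'); linarith [this.1]
  have hle : ∀ u : ℕ, ℙ Gᶜ ≤ ENNReal.ofReal (β ^ u) := by
    intro u
    calc ℙ Gᶜ ≤ ℙ {ω | ∀ s < u + m', p (min s m') ≤ U s ω} := measure_mono (hsub u)
      _ = ENNReal.ofReal (∏ s ∈ Finset.range (u + m'), (1 - p (min s m'))) :=
          measure_E m' p U hU hUindep hUunif hp (u + m')
      _ ≤ ENNReal.ofReal (β ^ u) := by
          apply ENNReal.ofReal_le_ofReal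
          rw [b_tail m' p u]
          exact mul_le_of_le_one_left (pow_nonneg hβ0 u) hb1
  have htend : Filter.Tendsto (fun u : ℕ => ENNReal.ofReal (β ^ u)) Filter.atTop (nhds 0) := by
    have := ENNReal.tendsto_ofReal
      (tendsto_pow_atTop_nhds_zero_of_lt_one hβ0 hβlt)
    rwa [ENNReal.ofReal_zero] at this
  have := ge_of_tendsto' htend hle
  exact le_antisymm this zero_le

/-- Master moment computation for the first return time. -/
lemma moments (hm' : 1 ≤ m')
    (hU : ∀ t, Measurable (U t))
    (hUindep : iIndepFun U ℙ)
    (hUunif : ∀ t, Measure.map (U t) ℙ = volume.restrict (Set.Icc (0 : ℝ) 1))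
    (hp : ∀ j ≤ m', p j ∈ Set.Icc (0 : ℝ) 1)
    (hfin : ℙ {ω | ∃ t, 1 ≤ t ∧ ageChain m' p U t ω = 0} = 1)
    (hsum : Summable (fun t : ℕ => ∏ s ∈ Finset.range t, (1 - p (min s m')))) :
    Integrable (fun ω => (firstReturn m' p U ω : ℝ)) ℙ ∧
    (∫ ω, (firstReturn m' p U ω : ℝ) ∂ℙ
      = ∑' t : ℕ, ∏ s ∈ Finset.range t, (1 - p (min s m'))) ∧
    (Summable (fun t : ℕ => (2 * t + 1 : ℝ) * ∏ s ∈ Finset.range t, (1 - p (min s m'))) →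
      MemLp (fun ω => (firstReturn m' p U ω : ℝ)) 2 ℙ ∧
      variance (fun ω => (firstReturn m' p U ω : ℝ)) ℙ
        = (∑' t : ℕ, (2 * t + 1 : ℝ) * ∏ s ∈ Finset.range t, (1 - p (min s m')))
          - (∑' t : ℕ, ∏ s ∈ Finset.range t, (1 - p (min s m'))) ^ 2) := by
  set b : ℕ → ℝ := fun t => ∏ s ∈ Finset.range t, (1 - p (min s m')) with hbdef
  set X := firstReturn m' p U with hX
  have hfac : ∀ s : ℕ, 0 ≤ 1 - p (min s m') ∧ 1 - p (min s m') ≤ 1 := by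
    intro s
    have := hp (min s m') (min_le_right s m')
    exact ⟨by linarith [this.2], by linarith [this.1]⟩
  have hb0 : ∀ t, 0 ≤ b t := fun t => Finset.prod_nonneg fun s _ => (hfac s).1
  have hXmeas : Measurable X := measurable_firstReturn m' p U hU
  have hgt : ∀ t, ℙ {ω | t < X ω} = ENNReal.ofReal (b t) := fun t =>
    measure_gt_firstReturn m' p U hU hUindep hUunif hm' hp hfin t
  have hlin : ∫⁻ ω, (X ω : ℝ≥0∞) ∂ℙ = ENNReal.ofReal (∑' t, b t) := by
    rw [lintegral_nat hXmeas, ENNReal.ofReal_tsum_of_nonneg hb0 hsum]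
    exact tsum_congr hgt
  have h1 := integral_of_lintegral_nat hXmeas (by rw [hlin]; exact ENNReal.ofReal_ne_top)
  have hmeanval : ∫ ω, (X ω : ℝ) ∂ℙ = ∑' t, b t := by
    rw [h1.2, hlin, ENNReal.toReal_ofReal (tsum_nonneg hb0)]
  refine ⟨h1.1, hmeanval, ?_⟩
  intro hcsum
  have hc0 : ∀ t : ℕ, 0 ≤ (2 * t + 1 : ℝ) * b t := fun t =>
    mul_nonneg (by positivity) (hb0 t)
  have hlin2 : ∫⁻ ω, (X ω : ℝ≥0∞) ^ 2 ∂ℙ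
      = ENNReal.ofReal (∑' t : ℕ, (2 * t + 1 : ℝ) * b t) := by
    rw [lintegral_nat_sq hXmeas, ENNReal.ofReal_tsum_of_nonneg hc0 hcsum]
    refine tsum_congr fun t => ?_
    rw [hgt t, ENNReal.ofReal_mul (by positivity : (0:ℝ) ≤ 2 * (t:ℝ) + 1)]
    congr 1
    rw [show (2 * (t:ℝ) + 1) = ((2 * t + 1 : ℕ) : ℝ) by push_cast; ring,
      ENNReal.ofReal_natCast]
    push_cast
    ring
  have h2 := integral_of_lintegral_nat_sq hXmeas (by rw [hlin2]; exact ENNReal.ofReal_ne_top)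
  have hsqval : ∫ ω, (X ω : ℝ) ^ 2 ∂ℙ = ∑' t : ℕ, (2 * t + 1 : ℝ) * b t := by
    rw [h2.2, hlin2, ENNReal.toReal_ofReal (tsum_nonneg hc0)]
  have hmem : MemLp (fun ω => (X ω : ℝ)) 2 ℙ := by
    refine (memLp_two_iff_integrable_sq
      ((measurable_from_top.comp hXmeas).aestronglyMeasurable)).2 ?_
    exact h2.1
  refine ⟨hmem, ?_⟩
  rw [variance_eq_sub hmem]
  have he1 : (∫ ω, ((fun ω => (X ω : ℝ)) ^ 2) ω ∂ℙ) = ∑' t : ℕ, (2 * t + 1 : ℝ) * b t := by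
    rw [← hsqval]
    congr 1
  rw [he1, hmeanval]

end ProbAux

/-- Optimality in the regime `m' ≤ ⌊n/m⌋ - 1`: every choice of transition
probabilities `p_0, …, p_{m'} ∈ [0,1]` whose first return time `X` to state `0`
is almost surely finite and has mean `n/m` satisfies
`Var[X] ≥ (n/m - m')(n/m - (m'+1))`; this minimum variance is attained at
`p_0 = ⋯ = p_{m'-1} = 0`, `p_{m'} = 1/(n/m - m')` (which also has mean `n/m`). -/
theorem firstReturn_variance_optimal_A
    {Ω : Type*} [MeasureSpace Ω] [IsProbabilityMeasure (ℙ : Measure Ω)]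
    (n m m' : ℕ) (hm : 0 < m) (hmn : m < n) (hm' : 1 ≤ m') (hm'le : m' ≤ n / m - 1)
    (U : ℕ → Ω → ℝ) (hUmeas : ∀ t, Measurable (U t))
    (hUindep : iIndepFun U ℙ)
    (hUunif : ∀ t, Measure.map (U t) ℙ = volume.restrict (Set.Icc (0 : ℝ) 1)) :
    (∀ p : ℕ → ℝ, (∀ j ≤ m', p j ∈ Set.Icc (0 : ℝ) 1) →
      ℙ {ω | ∃ t, 1 ≤ t ∧ ageChain m' p U t ω = 0} = 1 →
      (∫ ω, (firstReturn m' p U ω : ℝ) ∂ℙ = (n : ℝ) / m) →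
      ENNReal.ofReal (((n : ℝ) / m - m') * ((n : ℝ) / m - (m' + 1)))
        ≤ evariance (fun ω => (firstReturn m' p U ω : ℝ)) ℙ) ∧
    (∫ ω, (firstReturn m' (optPolicyA n m m') U ω : ℝ) ∂ℙ = (n : ℝ) / m) ∧
    variance (fun ω => (firstReturn m' (optPolicyA n m m') U ω : ℝ)) ℙ
      = ((n : ℝ) / m - m') * ((n : ℝ) / m - (m' + 1)) := by
  have hdiv1 : 1 ≤ n / m := (Nat.one_le_div_iff hm).2 hmn.le
  have hdiv : m' + 1 ≤ n / m := by omega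
  have hq1 : (m' : ℝ) + 1 ≤ (n : ℝ) / m := by
    calc ((m' : ℝ) + 1) = ((m' + 1 : ℕ) : ℝ) := by push_cast; ring
      _ ≤ ((n / m : ℕ) : ℝ) := by exact_mod_cast hdiv
      _ ≤ (n : ℝ) / m := Nat.cast_div_le
  set q : ℝ := (n : ℝ) / m with hqdef
  have hqpos : 0 < q := by
    have : (0:ℝ) ≤ m' := Nat.cast_nonneg m'
    linarith
  constructor
  · -- the lower bound for arbitrary admissible policies
    intro p hp hfin hmean
    set b : ℕ → ℝ := fun t => ∏ s ∈ Finset.range t, (1 - p (min s m')) with hbdef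
    set X := firstReturn m' p U with hX
    have hfac : ∀ s : ℕ, 0 ≤ 1 - p (min s m') ∧ 1 - p (min s m') ≤ 1 := by
      intro s
      have := hp (min s m') (min_le_right s m')
      exact ⟨by linarith [this.2], by linarith [this.1]⟩
    have hb0 : ∀ t, 0 ≤ b t := fun t => Finset.prod_nonneg fun s _ => (hfac s).1
    have hb1 : ∀ t, b t ≤ 1 := fun t =>
      Finset.prod_le_one (fun s _ => (hfac s).1) (fun s _ => (hfac s).2)
    -- summability of the survival probabilities
    have hXmeas : Measurable X := measurable_firstReturn m' p U hUmeas
    have hgt : ∀ t, ℙ {ω | t < X ω} = ENNReal.ofReal (b t) := fun t =>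
      measure_gt_firstReturn m' p U hUmeas hUindep hUunif hm' hp hfin t
    have hlin : ∫⁻ ω, (X ω : ℝ≥0∞) ∂ℙ = ∑' t, ENNReal.ofReal (b t) := by
      rw [lintegral_nat hXmeas]; exact tsum_congr hgt
    have hsumb : Summable b := by
      by_contra hnot
      have hinf : ∑' t, ENNReal.ofReal (b t) = ∞ := by
        by_contra hfin'
        apply hnot
        have hs := ENNReal.summable_toReal hfin'
        have hcong : (fun t => (ENNReal.ofReal (b t)).toReal) = b :=
          funext fun t => ENNReal.toReal_ofReal (hb0 t)
        rwa [hcong] at hs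
      have hnint : ¬ Integrable (fun ω => (X ω : ℝ)) ℙ := by
        intro hint
        have h2 := hint.2
        rw [HasFiniteIntegral] at h2
        have heq : ∫⁻ ω, ‖(X ω : ℝ)‖ₑ ∂ℙ = ∫⁻ ω, (X ω : ℝ≥0∞) ∂ℙ := by
          congr 1
          funext ω
          rw [Real.enorm_eq_ofReal (by positivity), ENNReal.ofReal_natCast]
        rw [heq, hlin, hinf] at h2
        exact absurd h2 (lt_irrefl _)
      rw [integral_undef hnint] at hmean
      linarith
    obtain ⟨hint, hintval, hrest⟩ :=
      moments m' p U hm' hUmeas hUindep hUunif hp hfin hsumb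
    have hsum_q : ∑' t, b t = q := by rw [← hintval]; exact hmean
    set β : ℝ := 1 - p m' with hβdef
    have hpm := hp m' le_rfl
    have hβ0 : 0 ≤ β := by simp only [hβdef]; linarith [hpm.2]
    have hβ1 : β ≤ 1 := by simp only [hβdef]; linarith [hpm.1]
    have htail : ∀ u : ℕ, b (u + m') = b m' * β ^ u := fun u => b_tail m' p u
    have hβlt : β < 1 := beta_lt_one m' q hq1 b hb1 β hβ1 htail hsumb hsum_q
    obtain ⟨hcsum, hbound⟩ :=
      variance_core m' hm' q hq1 b hb0 hb1 β hβ0 hβlt htail hsumb hsum_q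
    obtain ⟨hmem, hvar⟩ := hrest hcsum
    rw [← hmem.ofReal_variance_eq]
    apply ENNReal.ofReal_le_ofReal
    rw [hvar, hsum_q]
    linarith [hbound]
  · -- the optimal policy
    set p : ℕ → ℝ := optPolicyA n m m' with hpdef
    set d : ℝ := q - m' with hddef
    have hd1 : 1 ≤ d := by simp only [hddef]; linarith
    have hdpos : 0 < d := by linarith
    have hpm' : p m' = d⁻¹ := by
      simp only [hpdef, optPolicyA, lt_irrefl, if_false, hddef, hqdef]
    have hplt : ∀ j < m', p j = 0 := by
      intro j hj; simp only [hpdef, optPolicyA, hj, if_true]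
    have hp : ∀ j ≤ m', p j ∈ Set.Icc (0 : ℝ) 1 := by
      intro j hj
      rcases lt_or_eq_of_le hj with hj | rfl
      · rw [hplt j hj]; exact ⟨le_rfl, zero_le_one⟩
      · rw [hpm']
        constructor
        · positivity
        · exact inv_le_one_of_one_le₀ hd1
    set β : ℝ := 1 - p m' with hβdef
    have hβval : β = 1 - d⁻¹ := by rw [hβdef, hpm']
    have hβ0 : 0 ≤ β := by
      rw [hβval]
      have : d⁻¹ ≤ 1 := inv_le_one_of_one_le₀ hd1
      linarith
    have hβlt : β < 1 := by
      rw [hβval]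
      have : 0 < d⁻¹ := by positivity
      linarith
    have h1β : 1 - β = d⁻¹ := by rw [hβval]; ring
    set b : ℕ → ℝ := fun t => ∏ s ∈ Finset.range t, (1 - p (min s m')) with hbdef
    have hbfront : ∀ t ≤ m', b t = 1 := by
      intro t ht
      refine Finset.prod_eq_one fun s hs => ?_
      rw [Finset.mem_range] at hs
      rw [min_eq_left (by omega : s ≤ m'), hplt s (by omega)]
      ring
    have hbm' : b m' = 1 := hbfront m' le_rfl
    have htail : ∀ u : ℕ, b (u + m') = β ^ u := by
      intro u
      rw [show b (u + m') = b m' * (1 - p m') ^ u from b_tail m' p u, hbm', one_mul, ← hβdef]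
    have hfin : ℙ {ω | ∃ t, 1 ≤ t ∧ ageChain m' p U t ω = 0} = 1 :=
      fin_of_beta_lt_one m' p U hUmeas hUindep hUunif hm' hp hβ0 hβlt
    have hg1 : Summable (fun u : ℕ => β ^ u) := summable_geometric_of_lt_one hβ0 hβlt
    have hsumb : Summable b := by
      refine (summable_nat_add_iff m').1 ?_
      rw [funext htail]
      exact hg1
    have hfront_sum : ∑ t ∈ Finset.range m', b t = m' := by
      rw [Finset.sum_congr rfl fun t ht => hbfront t (Finset.mem_range.1 ht).le]
      simp
    have htail_sum : ∑' u : ℕ, b (u + m') = d := by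
      rw [funext htail, tsum_geometric_of_lt_one hβ0 hβlt, h1β, inv_inv]
    have hsum_q : ∑' t, b t = q := by
      rw [← hsumb.sum_add_tsum_nat_add m', hfront_sum, htail_sum, hddef]
      ring
    obtain ⟨hint, hintval, hrest⟩ :=
      moments m' p U hm' hUmeas hUindep hUunif hp hfin hsumb
    have hmean : ∫ ω, (firstReturn m' p U ω : ℝ) ∂ℙ = q := by rw [hintval, hsum_q]
    refine ⟨hmean, ?_⟩
    -- the variance computation
    set c : ℕ → ℝ := fun t => (2 * t + 1 : ℝ) * b t with hcdef
    obtain ⟨hts, htv⟩ := tail_sum_eq m' 1 β hβ0 hβlt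
    have hc_tail_eq : (fun u : ℕ => c (u + m'))
        = fun u : ℕ => (2 * (u : ℝ) + 2 * m' + 1) * (1 * β ^ u) := by
      funext u
      simp only [hcdef, htail u]
      push_cast
      ring
    have hcsum : Summable c := by
      refine (summable_nat_add_iff m').1 ?_
      rw [hc_tail_eq]
      exact hts
    obtain ⟨hmem, hvar⟩ := hrest hcsum
    have hfrontc : ∑ t ∈ Finset.range m', c t = (m' : ℝ) ^ 2 := by
      have : ∀ t ∈ Finset.range m', c t = ((2 * t + 1 : ℕ) : ℝ) := by
        intro t ht
        simp only [hcdef, hbfront t (Finset.mem_range.1 ht).le, mul_one]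
        push_cast
        ring
      rw [Finset.sum_congr rfl this, ← Nat.cast_sum, sum_odd_sq]
      push_cast
      ring
    have hγ : (1 - β)⁻¹ = d := by rw [h1β, inv_inv]
    have htailc : ∑' u : ℕ, c (u + m')
        = (2 * m' + 1) * d + 2 * (β * d ^ 2) := by
      rw [hc_tail_eq, htv, hγ]
      ring
    have hβd : β * d ^ 2 = d ^ 2 - d := by
      rw [hβval]
      field_simp
    have hsum_c : ∑' t, c t = (m' : ℝ) ^ 2 + ((2 * m' + 1) * d + 2 * (d ^ 2 - d)) := by
      rw [← hcsum.sum_add_tsum_nat_add m', hfrontc, htailc, hβd]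
    rw [hvar, hsum_c, hsum_q]
    have hqd : q = m' + d := by rw [hddef]; ring
    rw [hqd]
    ring
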